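/- arXiv:2603.00178 — 2 statements merged into one kernel-verified Lean document; each statement's English description precedes it below -/
import Mathlib

section
/- The closed-form ECA = μr·μf·(μp+λp+λc) / (μr·μf·(μp+λp+λc) + λc·μf·(μp+λc) + λc·λp·μr) satisfies ECA ≥ μr/(μr+λc) − λc·λp·μr / (μr·μf·(μp+λp+λc)), quantifying the approximation ECA ≈ μr/(μr+λc) when λc ≪ μp. -/
/-- The closed-form ECA satisfies
ECA ≥ μr/(μr+λc) − λc·λp·μr/(μr·μf·(μp+λp+λc)). -/
theorem eca_two_state_approximation
    (lc lp mr mf mp : ℝ) (hlc : 0 < lc) (hlp : 0 < lp)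
    (hmr : 0 < mr) (hmf : 0 < mf) (hmp : 0 < mp) :
    (mr * mf * (mp + lp + lc)) /
        (mr * mf * (mp + lp + lc) + lc * mf * (mp + lc) + lc * lp * mr)
      ≥ mr / (mr + lc) - lc * lp * mr / (mr * mf * (mp + lp + lc)) := by
  set A := mr * mf * (mp + lp + lc) with hA
  set B := lc * mf * (mp + lc) with hB
  set C := lc * lp * mr with hC
  have hApos : 0 < A := by positivity
  have hBpos : 0 < B := by positivity
  have hCpos : 0 < C := by positivity
  have hD : 0 < A + B + C := by linarith
  have h1 : mr / (mr + lc) ≤ A / (A + B) := by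
    rw [div_le_div_iff₀ (by linarith) (by linarith)]
    rw [hA, hB]
    nlinarith [mul_pos hmr hmf, mul_pos hlc hlp,
      mul_pos (mul_pos hmr hmf) (mul_pos hlc hlp)]
  have h2 : A / (A + B) - C / A ≤ A / (A + B + C) := by
    rw [div_sub_div _ _ (by linarith) (by positivity),
      div_le_div_iff₀ (by positivity) hD]
    nlinarith [mul_pos hBpos hCpos, sq_nonneg (B + C), mul_pos hCpos hCpos]
  have h3 : C / A = lc * lp * mr / (mr * mf * (mp + lp + lc)) := rfl
  linarith
end

section
/- The closed-form ECA is strictly decreasing in the crash rate λc: if 0 < λc < λc' and all other rates λp, μr, μf, μp are fixed positive reals, then ECA(λc') < ECA(λc). -/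
/-- The closed-form ECA is strictly decreasing in the crash
rate λc. -/
theorem eca_strict_anti_in_crash_rate
    (lp mr mf mp : ℝ) (hlp : 0 < lp) (hmr : 0 < mr) (hmf : 0 < mf)
    (hmp : 0 < mp) (lc lc' : ℝ) (hlc : 0 < lc) (hlt : lc < lc') :
    (mr * mf * (mp + lp + lc')) /
        (mr * mf * (mp + lp + lc') + lc' * mf * (mp + lc') + lc' * lp * mr)
      <
    (mr * mf * (mp + lp + lc)) /
        (mr * mf * (mp + lp + lc) + lc * mf * (mp + lc) + lc * lp * mr) := by
  have hlc' : 0 < lc' := hlc.trans hlt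
  have hd1 : 0 < mr * mf * (mp + lp + lc') + lc' * mf * (mp + lc') + lc' * lp * mr := by
    positivity
  have hd2 : 0 < mr * mf * (mp + lp + lc) + lc * mf * (mp + lc) + lc * lp * mr := by
    positivity
  rw [div_lt_div_iff₀ hd1 hd2]
  have key : 0 < mr * mf * (lc' - lc) *
      ((mf * mp + lp * mr) * (mp + lp) + mf * ((mp + lp) * (lc + lc') + lc * lc')) := by
    have h1 : 0 < lc' - lc := sub_pos.mpr hlt
    positivity
  nlinarith [key]
end
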